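/- Let V(r) := r^{-6} − 2r^{-3} and let ζ₆ := ∑_{(m,n)≠(0,0)} (m²+n²)^{-3} and ζ₁₂ := ∑_{(m,n)≠(0,0)} (m²+n²)^{-6}. Define X₁(A) := (2ζ₆A³ − √(4ζ₆²A⁶ − 32A⁴ + 8ζ₁₂A²))/4 and X₂(A) := (2ζ₆A³ + √(4ζ₆²A⁶ − 32A⁴ + 8ζ₁₂A²))/4. Then there exists A₃ > 0 such that for every A > A₃, every minimizer y_A ≥ 1 of the function y ↦ E_V(0,y,A) on [1,∞) satisfies X₁(A)^{1/3} ≤ y_A ≤ X₂(A)^{1/3}. In particular: (i) there exists C > 0 such that y_A ≤ C·A for all A > A₃; and (ii) for every M > 0 there exists A' such that for all A > A', every minimizer y_A ≥ 1 of y ↦ E_V(0,y,A) satisfies y_A > M (i.e. y_A → +∞ as A → +∞). -/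

import Mathlib

open Real

noncomputable section

/-- The classical Lennard-Jones potential `V(r) = r^{-6} − 2 r^{-3}`. -/
def VLJc (r : ℝ) : ℝ := r ^ (-6 : ℤ) - 2 * r ^ (-3 : ℤ)

def Qf (x y A : ℝ) (p : ℤ × ℤ) : ℝ :=
  A * (((p.1 : ℝ) + x * (p.2 : ℝ)) ^ 2 / y + y * (p.2 : ℝ) ^ 2)

def EV (x y A : ℝ) : ℝ :=
  ∑' p : {p : ℤ × ℤ // p ≠ 0}, VLJc (Qf x y A p.1)

/-- `ζ_{ℤ²}(6) = ∑ (m²+n²)^{-3}`. -/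
def zeta6 : ℝ :=
  ∑' p : {p : ℤ × ℤ // p ≠ 0}, ((p.1.1 : ℝ) ^ 2 + (p.1.2 : ℝ) ^ 2) ^ (-3 : ℤ)

/-- `ζ_{ℤ²}(12) = ∑ (m²+n²)^{-6}`. -/
def zeta12 : ℝ :=
  ∑' p : {p : ℤ × ℤ // p ≠ 0}, ((p.1.1 : ℝ) ^ 2 + (p.1.2 : ℝ) ^ 2) ^ (-6 : ℤ)

def X1 (A : ℝ) : ℝ :=
  (2 * zeta6 * A ^ 3 - Real.sqrt (4 * zeta6 ^ 2 * A ^ 6 - 32 * A ^ 4 + 8 * zeta12 * A ^ 2)) / 4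

def X2 (A : ℝ) : ℝ :=
  (2 * zeta6 * A ^ 3 + Real.sqrt (4 * zeta6 ^ 2 * A ^ 6 - 32 * A ^ 4 + 8 * zeta12 * A ^ 2)) / 4

/-! Write `u = (y / A)³` and `Q_y(m, n) = A (m² / y + y n²) ≥ (A / y)(m² + n²)` for `y ≥ 1`.
Keeping only the two shortest vectors `±(1, 0)` (where `Q_y = A / y`) in the repulsive sum and
comparing the attractive sum with `ζ₆` gives `E_V(0, y, A) ≥ 2u² - 2ζ₆u`. At the admissible trial
point `y = A` every `Q_A ≥ m² + n² ≥ 1`, so every term `V(Q_A) ≤ 0`, and `±(1, 0)` contribute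
`V(1) = -1` each: `E_V(0, A, A) ≤ -2`. Hence a minimizer satisfies `u² - ζ₆u + 1 ≤ 0`, i.e.
`ζ₆⁻¹ ≤ u ≤ ζ₆`, which gives the linear bounds; weakening the constant term `2A⁶` of
`2X² - 2ζ₆A³X + 2A⁶ ≤ 0` (`X = y³`) to `4A⁴ - ζ₁₂A²` gives the quadratic with roots `X₁(A)`, `X₂(A)`. -/

namespace RectangularLattice

def normSq (p : ℤ × ℤ) : ℝ := (p.1 : ℝ) ^ 2 + (p.2 : ℝ) ^ 2

lemma normSq_pos {p : ℤ × ℤ} (hp : p ≠ 0) : 0 < normSq p := by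
  have : p.1 ≠ 0 ∨ p.2 ≠ 0 := by contrapose! hp; exact Prod.ext hp.1 hp.2
  unfold normSq
  rcases this with h | h <;> positivity

lemma one_le_normSq {p : ℤ × ℤ} (hp : p ≠ 0) : 1 ≤ normSq p := by
  have h := normSq_pos hp
  unfold normSq at h ⊢
  exact_mod_cast (show (0 : ℤ) < p.1 ^ 2 + p.2 ^ 2 by exact_mod_cast h)

lemma sq_max_abs_le_add_sq (a b : ℝ) : max |a| |b| ^ 2 ≤ a ^ 2 + b ^ 2 := by
  rcases le_total |a| |b| with h | h
  · rw [max_eq_right h, sq_abs]; nlinarith [sq_nonneg a]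
  · rw [max_eq_left h, sq_abs]; nlinarith [sq_nonneg b]

lemma summable_normSq_zpow_neg {k : ℤ} (hk : 1 < k) :
    Summable fun p : ℤ × ℤ => normSq p ^ (-k) := by
  lift k to ℕ using (by omega)
  have h := (finTwoArrowEquiv ℤ).symm.summable_iff.mpr
    (EisensteinSeries.summable_one_div_norm_rpow (k := 2 * k) (by norm_cast; omega))
  refine Summable.of_nonneg_of_le (fun p => by unfold normSq; positivity) (fun p => ?_) h
  rcases eq_or_ne p 0 with rfl | hp
  · simp [normSq, zero_pow (by omega : k ≠ 0), Real.rpow_nonneg]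
  have hnorm : ‖(finTwoArrowEquiv ℤ).symm p‖ = max |(p.1 : ℝ)| |(p.2 : ℝ)| := by
    simp [EisensteinSeries.norm_eq_max_natAbs, Nat.cast_max]
  have hmax : 0 < max |(p.1 : ℝ)| |(p.2 : ℝ)| := by
    have : p.1 ≠ 0 ∨ p.2 ≠ 0 := by contrapose! hp; exact Prod.ext hp.1 hp.2
    rcases this with h | h
    · exact lt_max_of_lt_left (by positivity)
    · exact lt_max_of_lt_right (by positivity)
  simp only [Function.comp_apply, hnorm]
  rw [Real.rpow_neg hmax.le, show (2 * k : ℝ) = ((2 * k : ℕ) : ℝ) by push_cast; ring,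
    Real.rpow_natCast, zpow_neg, zpow_natCast, pow_mul]
  gcongr
  exact sq_max_abs_le_add_sq _ _

lemma zeta6_pos : 0 < zeta6 :=
  ((summable_normSq_zpow_neg (k := 3) (by norm_num)).comp_injective
    (Subtype.val_injective (p := (· ≠ 0)))).tsum_pos (fun p => zpow_nonneg (normSq_pos p.2).le _) ⟨(1, 0), by simp⟩ (by norm_num [normSq])

lemma zeta12_nonneg : 0 ≤ zeta12 :=
  tsum_nonneg fun _ => zpow_nonneg (by positivity) _

lemma zpow_neg_le_mul_zpow_neg {c s r : ℝ} {k : ℤ} (hk : 0 ≤ k) (hc : 0 < c) (hs : 0 < s)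
    (h : c * s ≤ r) : r ^ (-k) ≤ c ^ (-k) * s ^ (-k) := by
  lift k to ℕ using hk
  rw [← mul_zpow, zpow_neg, zpow_neg, zpow_natCast, zpow_natCast]
  gcongr

section Comparison

variable {ι : Type*} {c : ℝ} {s r : ι → ℝ} {k : ℤ}

lemma summable_zpow_neg_of_mul_le (hk : 0 ≤ k) (hc : 0 < c) (hs : ∀ i, 0 < s i) (h : ∀ i, c * s i ≤ r i)
    (hsum : Summable fun i => s i ^ (-k)) : Summable fun i => r i ^ (-k) :=
  (hsum.mul_left _).of_nonneg_of_le
    (fun i => have := (mul_pos hc (hs i)).trans_le (h i); by positivity)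
    (fun i => zpow_neg_le_mul_zpow_neg hk hc (hs i) (h i))

lemma tsum_zpow_neg_le_of_mul_le (hk : 0 ≤ k) (hc : 0 < c) (hs : ∀ i, 0 < s i) (h : ∀ i, c * s i ≤ r i)
    (hsum : Summable fun i => s i ^ (-k)) :
    ∑' i, r i ^ (-k) ≤ c ^ (-k) * ∑' i, s i ^ (-k) := by
  rw [← tsum_mul_left]
  exact (summable_zpow_neg_of_mul_le hk hc hs h hsum).tsum_le_tsum
    (fun i => zpow_neg_le_mul_zpow_neg hk hc (hs i) (h i)) (hsum.mul_left _)

end Comparison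

section RectangularForm

variable {y A : ℝ}

lemma Qf_zero_apply (p : ℤ × ℤ) : Qf 0 y A p = A * ((p.1 : ℝ) ^ 2 / y + y * (p.2 : ℝ) ^ 2) := by
  simp [Qf]

lemma div_mul_normSq_le_Qf_zero (hy : 1 ≤ y) (hA : 0 ≤ A) (p : ℤ × ℤ) :
    A / y * normSq p ≤ Qf 0 y A p := by
  have hy0 : 0 < y := zero_lt_one.trans_le hy
  have : (p.2 : ℝ) ^ 2 / y ≤ y * (p.2 : ℝ) ^ 2 := by
    rw [div_le_iff₀ hy0]; nlinarith [sq_nonneg (p.2 : ℝ), one_le_mul_of_one_le_of_one_le hy hy]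
  rw [Qf_zero_apply, normSq, div_mul_eq_mul_div, mul_div_assoc, add_div]
  gcongr

lemma Qf_zero_mk_zero (m : ℤ) : Qf 0 y A (m, 0) = A * (m : ℝ) ^ 2 / y := by
  simp [Qf_zero_apply, mul_div_assoc]

lemma summable_Qf_zero_zpow_neg (hy : 1 ≤ y) (hA : 0 < A) {k : ℤ} (hk : 1 < k) :
    Summable fun p : {p : ℤ × ℤ // p ≠ 0} => Qf 0 y A p.1 ^ (-k) :=
  summable_zpow_neg_of_mul_le (by omega) (div_pos hA (by linarith)) (fun p => normSq_pos p.2)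
    (fun p => div_mul_normSq_le_Qf_zero hy hA.le p.1)
    ((summable_normSq_zpow_neg hk).comp_injective (Subtype.val_injective (p := (· ≠ 0))))

lemma EV_zero_eq (hy : 1 ≤ y) (hA : 0 < A) :
    EV 0 y A = ∑' p : {p : ℤ × ℤ // p ≠ 0}, Qf 0 y A p.1 ^ (-6 : ℤ)
      - 2 * ∑' p : {p : ℤ × ℤ // p ≠ 0}, Qf 0 y A p.1 ^ (-3 : ℤ) := by
  rw [EV, ← tsum_mul_left, ← Summable.tsum_sub (summable_Qf_zero_zpow_neg hy hA (k := 6) (by norm_num))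
    ((summable_Qf_zero_zpow_neg hy hA (k := 3) (by norm_num)).mul_left 2)]
  rfl

lemma two_mul_le_tsum_comp_Qf_zero {f : ℝ → ℝ}
    (hf : ∀ p : {p : ℤ × ℤ // p ≠ 0}, 0 ≤ f (Qf 0 y A p.1))
    (hsum : Summable fun p : {p : ℤ × ℤ // p ≠ 0} => f (Qf 0 y A p.1)) :
    2 * f (A / y) ≤ ∑' p : {p : ℤ × ℤ // p ≠ 0}, f (Qf 0 y A p.1) := by
  have h := hsum.sum_le_tsum {⟨(1, 0), by simp⟩, ⟨(-1, 0), by simp⟩} (fun p _ => hf p)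
  rw [Finset.sum_pair (by decide)] at h
  simpa [Qf_zero_mk_zero, two_mul] using h

lemma div_zpow_neg_eq_pow (y A : ℝ) (k : ℕ) : (A / y) ^ (-(k : ℤ)) = (y / A) ^ k := by
  rw [zpow_neg, zpow_natCast, ← inv_pow, inv_div]

lemma EV_zero_ge (hy : 1 ≤ y) (hA : 0 < A) :
    2 * (y / A) ^ 6 - 2 * zeta6 * (y / A) ^ 3 ≤ EV 0 y A := by
  have h6 : 2 * (y / A) ^ 6 ≤ ∑' p : {p : ℤ × ℤ // p ≠ 0}, Qf 0 y A p.1 ^ (-6 : ℤ) := by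
    rw [← div_zpow_neg_eq_pow]
    exact two_mul_le_tsum_comp_Qf_zero (f := fun r => r ^ (-6 : ℤ))
      (fun p => (by decide : Even (-6 : ℤ)).zpow_nonneg _)
      (summable_Qf_zero_zpow_neg hy hA (k := 6) (by norm_num))
  have h3 : ∑' p : {p : ℤ × ℤ // p ≠ 0}, Qf 0 y A p.1 ^ (-3 : ℤ) ≤ (y / A) ^ 3 * zeta6 := by
    rw [← div_zpow_neg_eq_pow]
    exact tsum_zpow_neg_le_of_mul_le (s := fun p : {p : ℤ × ℤ // p ≠ 0} => normSq p.1)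
      (by norm_num) (div_pos hA (by linarith)) (fun p => normSq_pos p.2)
      (fun p => div_mul_normSq_le_Qf_zero hy hA.le p.1)
      ((summable_normSq_zpow_neg (k := 3) (by norm_num)).comp_injective
        (Subtype.val_injective (p := (· ≠ 0))))
  rw [EV_zero_eq hy hA]
  linarith

lemma VLJc_one : VLJc 1 = -1 := by norm_num [VLJc]

lemma VLJc_nonpos {r : ℝ} (hr : 1 ≤ r) : VLJc r ≤ 0 := by
  have h3 : r ^ (-3 : ℤ) ≤ 1 := zpow_le_one_of_nonpos₀ hr (by norm_num)
  have h6 : r ^ (-6 : ℤ) = r ^ (-3 : ℤ) * r ^ (-3 : ℤ) := by rw [← zpow_add₀ (by positivity)]; norm_num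
  have : 0 ≤ r ^ (-3 : ℤ) := by positivity
  rw [VLJc, h6]
  nlinarith

lemma EV_zero_self_le (hA : 1 ≤ A) : EV 0 A A ≤ -2 := by
  have hA0 : 0 < A := by linarith
  have hQ : ∀ p : {p : ℤ × ℤ // p ≠ 0}, 1 ≤ Qf 0 A A p.1 := fun p =>
    calc 1 ≤ normSq p.1 := one_le_normSq p.2
      _ = A / A * normSq p.1 := by rw [div_self hA0.ne', one_mul]
      _ ≤ Qf 0 A A p.1 := div_mul_normSq_le_Qf_zero hA hA0.le p.1
  have hsum : Summable fun p : {p : ℤ × ℤ // p ≠ 0} => -VLJc (Qf 0 A A p.1) :=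
    ((summable_Qf_zero_zpow_neg hA hA0 (k := 6) (by norm_num)).sub
      ((summable_Qf_zero_zpow_neg hA hA0 (k := 3) (by norm_num)).mul_left 2)).neg
  have h := two_mul_le_tsum_comp_Qf_zero (f := fun r => -VLJc r)
    (fun p => neg_nonneg.mpr (VLJc_nonpos (hQ p))) hsum
  rw [div_self hA0.ne', VLJc_one, tsum_neg] at h
  rw [EV]
  linarith

end RectangularForm

lemma cube_quadratic_nonpos_of_isMinOn {A yA : ℝ} (hA : 1 ≤ A) (hy : 1 ≤ yA)
    (hmin : IsMinOn (fun y => EV 0 y A) (Set.Ici 1) yA) :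
    (yA ^ 3) ^ 2 - zeta6 * A ^ 3 * yA ^ 3 + A ^ 6 ≤ 0 := by
  have hA0 : 0 < A := by linarith
  have hle : EV 0 yA A ≤ EV 0 A A := isMinOn_iff.mp hmin A hA
  have hlow := EV_zero_ge hy hA0
  have htrial := EV_zero_self_le hA
  calc (yA ^ 3) ^ 2 - zeta6 * A ^ 3 * yA ^ 3 + A ^ 6
      = A ^ 6 * ((yA / A) ^ 6 - zeta6 * (yA / A) ^ 3 + 1) := by field_simp
    _ ≤ 0 := mul_nonpos_of_nonneg_of_nonpos (by positivity) (by linarith)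

lemma le_add_one_mul_of_pow_three_le {a b c : ℝ} (hb : 0 ≤ b) (hc : 0 ≤ c)
    (h : a ^ 3 ≤ c * b ^ 3) : a ≤ (c + 1) * b := by
  have hc3 : c ≤ (c + 1) ^ 3 := by nlinarith [sq_nonneg c]
  refine le_of_pow_le_pow_left₀ (by norm_num : 3 ≠ 0) (by positivity) ?_
  rw [mul_pow]
  nlinarith [pow_nonneg hb 3]

lemma le_mul_and_le_mul_of_isMinOn {A yA : ℝ} (hA : 1 ≤ A) (hy : 1 ≤ yA)
    (hmin : IsMinOn (fun y => EV 0 y A) (Set.Ici 1) yA) :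
    yA ≤ (zeta6 + 1) * A ∧ A ≤ (zeta6 + 1) * yA := by
  have hq := cube_quadratic_nonpos_of_isMinOn hA hy hmin
  have hA3 : 0 < A ^ 3 := by positivity
  have hy3 : 0 < yA ^ 3 := by positivity
  constructor
  · refine le_add_one_mul_of_pow_three_le (by linarith) zeta6_pos.le ?_
    nlinarith [pow_pos hA3 2]
  · refine le_add_one_mul_of_pow_three_le (by linarith) zeta6_pos.le ?_
    nlinarith [pow_pos hy3 2]

lemma mem_Icc_of_quadratic_nonpos {a b c x : ℝ} (ha : 0 < a) (h : a * x ^ 2 + b * x + c ≤ 0) :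
    x ∈ Set.Icc ((-b - √(b ^ 2 - 4 * a * c)) / (2 * a)) ((-b + √(b ^ 2 - 4 * a * c)) / (2 * a)) := by
  have hsq : (2 * a * x + b) ^ 2 ≤ b ^ 2 - 4 * a * c := by nlinarith
  obtain ⟨hl, hr⟩ := abs_le.mp (Real.abs_le_sqrt hsq)
  constructor
  · rw [div_le_iff₀ (by positivity)]; linarith
  · rw [le_div_iff₀ (by positivity)]; linarith

lemma pow_three_mem_Icc_X1_X2_of_isMinOn {A yA : ℝ} (hA : 2 ≤ A) (hy : 1 ≤ yA)
    (hmin : IsMinOn (fun y => EV 0 y A) (Set.Ici 1) yA) : yA ^ 3 ∈ Set.Icc (X1 A) (X2 A) := by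
  have hq := cube_quadratic_nonpos_of_isMinOn (by linarith) hy hmin
  have hA6 : 4 * A ^ 4 - zeta12 * A ^ 2 ≤ 2 * A ^ 6 := by
    have : 0 ≤ zeta12 * A ^ 2 := mul_nonneg zeta12_nonneg (sq_nonneg A)
    nlinarith [mul_nonneg (pow_nonneg (sq_nonneg A) 2) (by nlinarith : (0 : ℝ) ≤ A ^ 2 - 2)]
  have := mem_Icc_of_quadratic_nonpos (a := 2) (b := -2 * zeta6 * A ^ 3)
    (c := 4 * A ^ 4 - zeta12 * A ^ 2) (x := yA ^ 3) (by norm_num) (by linarith)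
  unfold X1 X2
  convert this using 3 <;> ring_nf

-- Without this, `X1 A ^ (1 / 3 : ℝ)` would be `Real.rpow` at a negative base, not a cube root.
lemma X1_nonneg {A : ℝ} (hA : 0 ≤ A) (h : zeta12 ≤ 4 * A ^ 2) : 0 ≤ X1 A := by
  have : √(4 * zeta6 ^ 2 * A ^ 6 - 32 * A ^ 4 + 8 * zeta12 * A ^ 2) ≤ 2 * zeta6 * A ^ 3 :=
    Real.sqrt_le_iff.mpr ⟨by have := zeta6_pos; positivity, by nlinarith [sq_nonneg A]⟩
  unfold X1
  linarith

lemma mem_Icc_rpow_one_third_of_pow_three_mem_Icc {a b y : ℝ} (ha : 0 ≤ a) (hy : 0 ≤ y) (h : y ^ 3 ∈ Set.Icc a b) :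
    y ∈ Set.Icc (a ^ ((1 : ℝ) / 3)) (b ^ ((1 : ℝ) / 3)) := by
  have hb : 0 ≤ b := ha.trans (h.1.trans h.2)
  rw [one_div]
  constructor
  · exact (Real.rpow_inv_le_iff_of_pos ha hy (by norm_num)).mpr (by exact_mod_cast h.1)
  · exact (Real.le_rpow_inv_iff_of_pos hy hb (by norm_num)).mpr (by exact_mod_cast h.2)

end RectangularLattice

/-- Degeneracy of the minimizer among rectangular lattices: for large areas, any minimizer
`y_A ≥ 1` of `y ↦ E_V(0,y,A)` satisfies `X₁(A)^{1/3} ≤ y_A ≤ X₂(A)^{1/3}`; in particular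
`y_A ≤ C·A` and `y_A → +∞` as `A → +∞`. -/
theorem rectangular_degeneracy :
    ∃ A₃ > (0 : ℝ),
      (∀ A > A₃, ∀ yA : ℝ, 1 ≤ yA →
        IsMinOn (fun y => EV 0 y A) (Set.Ici 1) yA →
          X1 A ^ ((1 : ℝ) / 3) ≤ yA ∧ yA ≤ X2 A ^ ((1 : ℝ) / 3)) ∧
      (∃ C > (0 : ℝ), ∀ A > A₃, ∀ yA : ℝ, 1 ≤ yA →
        IsMinOn (fun y => EV 0 y A) (Set.Ici 1) yA → yA ≤ C * A) ∧
      (∀ M > (0 : ℝ), ∃ A' : ℝ, ∀ A > A', ∀ yA : ℝ, 1 ≤ yA →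
        IsMinOn (fun y => EV 0 y A) (Set.Ici 1) yA → M < yA) := by
  -- `A > max 2 zeta12` makes `y = A` admissible, `2 A⁶ ≥ 4 A⁴ - ζ₁₂ A²` and `ζ₁₂ ≤ 4 A²`.
  have hC : 0 < zeta6 + 1 := by linarith [RectangularLattice.zeta6_pos]
  refine ⟨max 2 zeta12, by positivity, fun A hA yA hy hmin => ?_,
    ⟨zeta6 + 1, hC, fun A hA yA hy hmin => ?_⟩,
    fun M _ => ⟨max (max 2 zeta12) ((zeta6 + 1) * M), fun A hA yA hy hmin => ?_⟩⟩
  · obtain ⟨h2, h12⟩ := max_lt_iff.mp hA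
    exact RectangularLattice.mem_Icc_rpow_one_third_of_pow_three_mem_Icc
      (RectangularLattice.X1_nonneg (by linarith) (by nlinarith)) (by linarith)
      (RectangularLattice.pow_three_mem_Icc_X1_X2_of_isMinOn h2.le hy hmin)
  · have h2 := (max_lt_iff.mp hA).1
    exact (RectangularLattice.le_mul_and_le_mul_of_isMinOn (by linarith) hy hmin).1
  · obtain ⟨hA₃, hM⟩ := max_lt_iff.mp hA
    have h := (RectangularLattice.le_mul_and_le_mul_of_isMinOn
      (by linarith [le_max_left 2 zeta12]) hy hmin).2
    exact lt_of_mul_lt_mul_left (hM.trans_le h) hC.le
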